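/- arXiv:2304.07823 — 2 statements merged into one kernel-verified Lean document; each statement's English description precedes it below -/
import Mathlib

section
/- The set of rational preperiodic points of f(x) = x² - 2 is exactly {0, 1, -1, 2, -2}. -/
lemma den_add_int (q : ℚ) (n : ℤ) : (q + n).den = q.den := by
  have h1 : (q + n).den ∣ q.den := by simpa using Rat.add_den_dvd q n
  have h2 : q.den ∣ (q + n).den := by
    have := Rat.add_den_dvd (q + n) (-n)
    simpa using this
  exact Nat.dvd_antisymm h1 h2

lemma den_f (x : ℚ) : (x ^ 2 - 2).den = x.den ^ 2 := by
  have : x ^ 2 - 2 = x ^ 2 + ((-2 : ℤ) : ℚ) := by push_cast; ring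
  rw [this, den_add_int, Rat.den_pow]

lemma den_iter (x : ℚ) (hx : 2 ≤ x.den) (k : ℕ) :
    ((fun y : ℚ => y ^ 2 - 2)^[k] x).den = x.den ^ (2 ^ k) := by
  induction k with
  | zero => simp
  | succ n ih =>
    rw [Function.iterate_succ_apply', den_f, ih, ← pow_mul, pow_succ]

lemma abs_f (x : ℚ) (hx : 3 ≤ |x|) : |x| < |x ^ 2 - 2| ∧ 3 ≤ |x ^ 2 - 2| := by
  have h9 : 9 ≤ x ^ 2 := by
    have := sq_abs x
    nlinarith [abs_nonneg x]
  have h2 : (2:ℚ) ≤ x ^ 2 - 2 := by linarith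
  have habs : |x ^ 2 - 2| = x ^ 2 - 2 := abs_of_nonneg (by linarith)
  rw [habs]
  constructor
  · nlinarith [sq_abs x, abs_nonneg x]
  · linarith

lemma abs_iter (x : ℚ) (hx : 3 ≤ |x|) : StrictMono fun k : ℕ =>
    |(fun y : ℚ => y ^ 2 - 2)^[k] x| := by
  have key : ∀ k : ℕ, 3 ≤ |(fun y : ℚ => y ^ 2 - 2)^[k] x| := by
    intro k
    induction k with
    | zero => simpa using hx
    | succ n ih =>
      rw [Function.iterate_succ_apply']
      exact (abs_f _ ih).2
  apply strictMono_nat_of_lt_succ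
  intro n
  rw [Function.iterate_succ_apply']
  exact (abs_f _ (key n)).1

theorem rat_preperiodic_points :
    {x : ℚ | (Set.range fun k : ℕ => (fun y : ℚ => y ^ 2 - 2)^[k] x).Finite} =
      ({0, 1, -1, 2, -2} : Set ℚ) := by
  ext x
  simp only [Set.mem_setOf_eq, Set.mem_insert_iff, Set.mem_singleton_iff]
  constructor
  · intro hfin
    by_contra hx
    push_neg at hx
    obtain ⟨h0, h1, hm1, h2, hm2⟩ := hx
    -- x has infinite orbit: either den ≥ 2 or |x| ≥ 3
    have hinj : Function.Injective fun k : ℕ => (fun y : ℚ => y ^ 2 - 2)^[k] x := by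
      rcases le_or_gt 2 x.den with hd | hd
      · -- denominator case
        have : StrictMono fun k : ℕ => ((fun y : ℚ => y ^ 2 - 2)^[k] x).den := by
          have : (fun k : ℕ => ((fun y : ℚ => y ^ 2 - 2)^[k] x).den) =
              fun k => x.den ^ (2 ^ k) := by
            funext k; exact den_iter x hd k
          rw [this]
          intro a b hab
          exact Nat.pow_lt_pow_right (by omega) (Nat.pow_lt_pow_right (by omega) hab)
        exact Function.Injective.of_comp (f := Rat.den) this.injective
      · -- integer case
        have hden : x.den = 1 := by
          have := x.pos
          omega
        have hxint : (x.num : ℚ) = x := by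
          conv_rhs => rw [← Rat.num_div_den x]
          rw [hden]; simp
        have habs3 : 3 ≤ |x| := by
          have hnum : 3 ≤ |x.num| := by
            by_contra hlt
            push_neg at hlt
            rw [abs_lt] at hlt
            obtain ⟨hl, hr⟩ := hlt
            interval_cases x.num <;>
              [exact hm2 (by exact_mod_cast hxint.symm);
               exact hm1 (by exact_mod_cast hxint.symm);
               exact h0 (by exact_mod_cast hxint.symm);
               exact h1 (by exact_mod_cast hxint.symm);
               exact h2 (by exact_mod_cast hxint.symm)]
          calc (3:ℚ) = ((3:ℤ) : ℚ) := by norm_num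
          _ ≤ ((|x.num| : ℤ) : ℚ) := by exact_mod_cast hnum
          _ = |(x.num : ℚ)| := Int.cast_abs
          _ = |x| := by rw [hxint]
        exact Function.Injective.of_comp (f := fun y : ℚ => |y|)
          (abs_iter x habs3).injective
    exact (Set.infinite_range_of_injective hinj) hfin
  · -- backward: each of the five points has finite orbit
    intro hx
    have hsub : Set.range (fun k : ℕ => (fun y : ℚ => y ^ 2 - 2)^[k] x) ⊆
        ({0, 1, -1, 2, -2} : Set ℚ) := by
      rintro _ ⟨k, rfl⟩
      induction k with
      | zero => simpa using hx
      | succ n ih =>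
        show (fun y : ℚ => y ^ 2 - 2)^[n + 1] x ∈ ({0, 1, -1, 2, -2} : Set ℚ)
        rw [Function.iterate_succ_apply']
        have ih' : (fun y : ℚ => y ^ 2 - 2)^[n] x ∈ ({0, 1, -1, 2, -2} : Set ℚ) := ih
        simp only [Set.mem_insert_iff, Set.mem_singleton_iff] at ih' ⊢
        rcases ih' with h | h | h | h | h <;> rw [h] <;> norm_num
    exact Set.Finite.subset (Set.toFinite _) hsub
end

section
/- Let K be a number field of degree D. The set of preperiodic points of f(x) = x² - 2 in K is finite, with cardinality at most ∑_{n=1}^{8D²} φ(n). -/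
/-!
If `x ∈ K` has a finite orbit under `y ↦ y ^ 2 - 2`, write `x = ζ + ζ⁻¹` in an algebraic closure.
The map acts as `ζ ↦ ζ ^ 2`, so finiteness of the orbit forces `ζ` to be a root of unity, of
order `n` say. As `ζ` is a root of `X ^ 2 - x X + 1 ∈ K[X]`, `φ n = [ℚ(ζ) : ℚ] ≤ 2 D`, and
`n ≤ 2 φ(n) ^ 2` gives `n ≤ 8 D ^ 2`. Since `ζ` determines `x`, the preperiodic points are at most
as many as the roots of unity of order at most `8 D ^ 2`.
-/

open Polynomial IntermediateField
open scoped Nat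

namespace Nat

theorem le_totient_sq_of_odd {n : ℕ} (hn : Odd n) : n ≤ φ n ^ 2 := by
  induction n using Nat.recOnPosPrimePosCoprime with
  | prime_pow p k hp hk =>
    have hp3 : 3 ≤ p := by
      have := Nat.odd_iff.mp (hn.of_dvd_nat (dvd_pow_self p hk.ne'))
      have := hp.two_le
      omega
    have hp1 : p ≤ (p - 1) ^ 2 := by
      obtain ⟨t, rfl⟩ : ∃ t, p = t + 1 := ⟨p - 1, by omega⟩
      rw [Nat.add_sub_cancel]
      nlinarith
    obtain ⟨j, rfl⟩ := Nat.exists_eq_add_of_lt hk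
    rw [zero_add, totient_prime_pow_succ hp, mul_pow, pow_succ, sq (p ^ j), mul_assoc]
    exact Nat.mul_le_mul_left _ (hp1.trans (Nat.le_mul_of_pos_left _ (by positivity)))
  | zero => simp at hn
  | one => simp
  | coprime a b _ _ hab iha ihb =>
    obtain ⟨ha, hb⟩ := Nat.odd_mul.mp hn
    rw [totient_mul hab, mul_pow]
    exact Nat.mul_le_mul (iha ha) (ihb hb)

theorem two_pow_le_two_mul_totient_sq (k : ℕ) : 2 ^ k ≤ 2 * φ (2 ^ k) ^ 2 := by
  rcases k with _ | k
  · simp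
  · rw [totient_prime_pow_succ prime_two, Nat.add_one_sub_one, mul_one, pow_succ]
    nlinarith [Nat.one_le_two_pow (n := k)]

theorem le_two_mul_totient_sq (n : ℕ) : n ≤ 2 * φ n ^ 2 := by
  rcases eq_or_ne n 0 with rfl | hn
  · simp
  obtain ⟨k, m, hm, rfl⟩ := exists_eq_two_pow_mul_odd hn
  rw [totient_mul ((Nat.coprime_two_left.mpr hm).pow_left k), mul_pow, ← mul_assoc]
  exact Nat.mul_le_mul (two_pow_le_two_mul_totient_sq k) (le_totient_sq_of_odd hm)

end Nat

theorem Units.eq_or_eq_inv_of_val_add_inv_eq {R : Type*} [CommRing R] [IsDomain R] {u v : Rˣ}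
    (h : (u : R) + ↑u⁻¹ = v + ↑v⁻¹) : u = v ∨ u = v⁻¹ := by
  have key : ((u : R) - v) * (u * v - 1) = 0 := by
    linear_combination (↑u * ↑v) * h - (v : R) * u.mul_inv + (u : R) * v.mul_inv
  rcases mul_eq_zero.mp key with h | h
  · exact .inl (Units.ext (sub_eq_zero.mp h))
  · exact .inr (eq_inv_of_mul_eq_one_left (Units.ext (by simpa [sub_eq_zero] using h)))

theorem iterate_sq_sub_two_add_inv {R : Type*} [CommRing R] (u : Rˣ) (k : ℕ) :
    (fun y : R => y ^ 2 - 2)^[k] (u + ↑u⁻¹) = ↑(u ^ 2 ^ k) + ↑(u ^ 2 ^ k)⁻¹ := by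
  induction k with
  | zero => simp
  | succ k ih =>
    rw [Function.iterate_succ_apply', ih, pow_succ 2 k, pow_mul]
    generalize u ^ 2 ^ k = a
    push_cast
    linear_combination 2 * a.mul_inv

theorem RingHom.map_iterate_sq_sub_two {R S : Type*} [Ring R] [Ring S] (f : R →+* S) (x : R)
    (k : ℕ) : f ((fun y : R => y ^ 2 - 2)^[k] x) = (fun y : S => y ^ 2 - 2)^[k] (f x) :=
  (Function.Semiconj.iterate_right (fun y => by simp [map_ofNat]) k) x

theorem isOfFinOrder_of_iterate_sq_sub_two_eq {R : Type*} [CommRing R] [IsDomain R] (u : Rˣ)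
    {m n : ℕ} (hmn : m ≠ n)
    (h : (fun y : R => y ^ 2 - 2)^[m] (u + ↑u⁻¹) = (fun y : R => y ^ 2 - 2)^[n] (u + ↑u⁻¹)) :
    IsOfFinOrder u := by
  rw [iterate_sq_sub_two_add_inv, iterate_sq_sub_two_add_inv] at h
  by_contra hu
  have hinj := injective_zpow_iff_not_isOfFinOrder.mpr hu
  rcases Units.eq_or_eq_inv_of_val_add_inv_eq h with h | h
  · have := hinj (a₁ := (2 ^ m : ℕ)) (a₂ := (2 ^ n : ℕ)) (by simpa only [zpow_natCast] using h)
    exact hmn (Nat.pow_right_injective le_rfl (by exact_mod_cast this))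
  · have := hinj (a₁ := (2 ^ m : ℕ)) (a₂ := -(2 ^ n : ℕ))
      (by simpa only [zpow_neg, zpow_natCast] using h)
    have : (0 : ℤ) < (2 ^ m : ℕ) + (2 ^ n : ℕ) := by positivity
    omega

theorem minpoly.natDegree_le_finrank_mul_natDegree (F : Type*) {K L : Type*} [Field F] [Field K]
    [Field L] [Algebra F K] [Algebra K L] [Algebra F L] [IsScalarTower F K L]
    [FiniteDimensional F K] (x : L) :
    (minpoly F x).natDegree ≤ Module.finrank F K * (minpoly K x).natDegree := by
  by_cases hx : IsIntegral K x
  · have : FiniteDimensional K K⟮x⟯ := IntermediateField.adjoin.finiteDimensional hx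
    have : FiniteDimensional F K⟮x⟯ := FiniteDimensional.trans F K K⟮x⟯
    have : IsScalarTower F K⟮x⟯ L := .of_algebraMap_eq fun _ => rfl
    let x' : K⟮x⟯ := ⟨x, IntermediateField.mem_adjoin_simple_self K x⟩
    calc (minpoly F x).natDegree = (minpoly F x').natDegree := by
          rw [← minpoly.algebraMap_eq (algebraMap K⟮x⟯ L).injective x']; rfl
      _ ≤ Module.finrank F K⟮x⟯ := minpoly.natDegree_le x'
      _ = Module.finrank F K * (minpoly K x).natDegree := by
          rw [← Module.finrank_mul_finrank F K K⟮x⟯, IntermediateField.adjoin.finrank hx]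
  · rw [minpoly.eq_zero fun h => hx h.tower_top, natDegree_zero]
    exact Nat.zero_le _

theorem card_primitiveRoots_le_totient {R : Type*} [CommRing R] [IsDomain R] (n : ℕ) :
    (primitiveRoots n R).card ≤ φ n := by
  by_cases h : ∃ ζ : R, IsPrimitiveRoot ζ n
  · obtain ⟨ζ, hζ⟩ := h
    exact hζ.card_primitiveRoots.le
  · rcases Nat.eq_zero_or_pos n with rfl | hn
    · simp
    · rw [Finset.card_eq_zero.mpr (Finset.eq_empty_of_forall_notMem fun ζ hζ =>
        h ⟨ζ, (mem_primitiveRoots hn).mp hζ⟩)]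
      exact Nat.zero_le _

theorem IsAlgClosed.exists_add_inv_eq {k : Type*} [Field k] [IsAlgClosed k] (x : k) :
    ∃ u : kˣ, (u : k) + ↑u⁻¹ = x := by
  obtain ⟨ζ, hζ⟩ := IsAlgClosed.exists_root (C 1 * X ^ 2 + C (-x) * X + C 1)
    (by rw [degree_quadratic one_ne_zero]; decide)
  have hζ' : ζ * (ζ - x) = -1 := by
    simp only [IsRoot, eval_add, eval_mul, eval_C, eval_pow, eval_X] at hζ
    linear_combination hζ
  have hζ0 : ζ ≠ 0 := by rintro rfl; simp at hζ'
  refine ⟨Units.mk0 ζ hζ0, ?_⟩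
  simp only [Units.val_inv_eq_inv_val, Units.val_mk0]
  field_simp
  linear_combination hζ'

theorem natDegree_minpoly_le_two_of_add_inv_eq {K L : Type*} [Field K] [CommRing L] [Nontrivial L]
    [Algebra K L] (u : Lˣ) {x : K} (hx : (u : L) + ↑u⁻¹ = algebraMap K L x) :
    (minpoly K (u : L)).natDegree ≤ 2 := by
  have hroot : aeval (u : L) (X ^ 2 - C x * X + 1) = 0 := by
    simp only [map_add, map_sub, map_mul, map_pow, aeval_X, aeval_C, map_one, ← hx]
    linear_combination -u.mul_inv
  have hmonic : (X ^ 2 - C x * X + 1 : K[X]).Monic := by monicity!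
  calc (minpoly K (u : L)).natDegree ≤ (X ^ 2 - C x * X + 1 : K[X]).natDegree :=
        natDegree_le_natDegree (minpoly.degree_le_of_ne_zero K _ hmonic.ne_zero hroot)
    _ ≤ 2 := by compute_degree

theorem isOfFinOrder_of_finite_range_iterate_sq_sub_two {R L : Type*} [CommRing R] [CommRing L]
    [IsDomain L] [Algebra R L] (u : Lˣ) {x : R} (hu : (u : L) + ↑u⁻¹ = algebraMap R L x)
    (hx : (Set.range fun k : ℕ => (fun y : R => y ^ 2 - 2)^[k] x).Finite) : IsOfFinOrder u := by
  obtain ⟨m, n, hmn, h⟩ := Set.Finite.exists_lt_map_eq_of_forall_mem (Set.mem_range_self ·) hx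
  refine isOfFinOrder_of_iterate_sq_sub_two_eq u hmn.ne ?_
  simp only [hu, ← RingHom.map_iterate_sq_sub_two, h]

theorem totient_orderOf_le_two_mul_finrank {K L : Type*} [Field K] [NumberField K] [Field L]
    [Algebra K L] {u : Lˣ} (hu : IsOfFinOrder u) {x : K} (hx : (u : L) + ↑u⁻¹ = algebraMap K L x) :
    φ (orderOf u) ≤ 2 * Module.finrank ℚ K := by
  have : CharZero L := charZero_of_injective_algebraMap (algebraMap K L).injective
  rw [← orderOf_units (y := u)]
  calc φ (orderOf (u : L))
      = (minpoly ℚ (u : L)).natDegree := by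
        rw [← cyclotomic_eq_minpoly_rat (IsPrimitiveRoot.orderOf _)
          (by rw [orderOf_units]; exact hu.orderOf_pos), natDegree_cyclotomic]
    _ ≤ Module.finrank ℚ K * (minpoly K (u : L)).natDegree :=
        minpoly.natDegree_le_finrank_mul_natDegree ℚ _
    _ ≤ 2 * Module.finrank ℚ K := by
        rw [mul_comm]; exact Nat.mul_le_mul_right _ (natDegree_minpoly_le_two_of_add_inv_eq u hx)

theorem exists_primitiveRoot_add_inv_eq_of_finite_range_iterate_sq_sub_two {K : Type*}
    (Ω : Type*) [Field K] [NumberField K] [Field Ω] [IsAlgClosed Ω] [Algebra K Ω] {x : K}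
    (hx : (Set.range fun k : ℕ => (fun y : K => y ^ 2 - 2)^[k] x).Finite) :
    ∃ n ∈ Finset.Icc 1 (8 * Module.finrank ℚ K ^ 2), ∃ ζ ∈ primitiveRoots n Ω,
      ζ + ζ⁻¹ = algebraMap K Ω x := by
  obtain ⟨u, hu⟩ := IsAlgClosed.exists_add_inv_eq (algebraMap K Ω x)
  have hfin := isOfFinOrder_of_finite_range_iterate_sq_sub_two u hu hx
  have hord : orderOf u ≤ 8 * Module.finrank ℚ K ^ 2 :=
    calc orderOf u ≤ 2 * φ (orderOf u) ^ 2 := Nat.le_two_mul_totient_sq _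
      _ ≤ 2 * (2 * Module.finrank ℚ K) ^ 2 := by
          gcongr; exact totient_orderOf_le_two_mul_finrank hfin hu
      _ = 8 * Module.finrank ℚ K ^ 2 := by ring
  refine ⟨orderOf u, Finset.mem_Icc.mpr ⟨hfin.orderOf_pos, hord⟩, u, ?_, by simpa using hu⟩
  rw [mem_primitiveRoots hfin.orderOf_pos, ← orderOf_units]
  exact IsPrimitiveRoot.orderOf _

theorem preperiodic_finite_card_bound (K : Type*) [Field K] [NumberField K] :
    {x : K | (Set.range fun k : ℕ => (fun y : K => y ^ 2 - 2)^[k] x).Finite}.Finite ∧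
      {x : K | (Set.range fun k : ℕ => (fun y : K => y ^ 2 - 2)^[k] x).Finite}.ncard ≤
        ∑ n ∈ Finset.Icc 1 (8 * Module.finrank ℚ K ^ 2), Nat.totient n := by
  classical
  set S := {x : K | (Set.range fun k : ℕ => (fun y : K => y ^ 2 - 2)^[k] x).Finite}
  set N := 8 * Module.finrank ℚ K ^ 2
  let Ω := AlgebraicClosure K
  let T : Finset Ω := ((Finset.Icc 1 N).biUnion (primitiveRoots · Ω)).image fun ζ => ζ + ζ⁻¹
  have hST : algebraMap K Ω '' S ⊆ T := by
    rintro _ ⟨x, hx, rfl⟩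
    obtain ⟨n, hn, ζ, hζ, hζx⟩ :=
      exists_primitiveRoot_add_inv_eq_of_finite_range_iterate_sq_sub_two Ω hx
    exact Finset.mem_image.mpr ⟨ζ, Finset.mem_biUnion.mpr ⟨n, hn, hζ⟩, hζx⟩
  have hinj : Function.Injective (algebraMap K Ω) := (algebraMap K Ω).injective
  refine ⟨(T.finite_toSet.subset hST).of_finite_image hinj.injOn, ?_⟩
  calc S.ncard = (algebraMap K Ω '' S).ncard := (Set.ncard_image_of_injective S hinj).symm
    _ ≤ T.card := by rw [← Set.ncard_coe_finset]; exact Set.ncard_le_ncard hST T.finite_toSet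
    _ ≤ ((Finset.Icc 1 N).biUnion (primitiveRoots · Ω)).card := Finset.card_image_le
    _ ≤ ∑ n ∈ Finset.Icc 1 N, (primitiveRoots n Ω).card := Finset.card_biUnion_le
    _ ≤ ∑ n ∈ Finset.Icc 1 N, φ n := Finset.sum_le_sum fun n _ => card_primitiveRoots_le_totient n
end
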